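/- Let μ be a probability measure on a measurable space X and let a ≤ 0 ≤ b be real constants. If f : X → [a,b] is a measurable function and φ is a continuous m-convex function on [a,b], with m ∈ (0,1], then f and x ↦ φ(m f(x)) are μ-integrable and φ(m a + m² b − m² ∫_X f dμ) ≤ m φ(a) + m² φ(b) − m ∫_X φ(m f) dμ. -/

import Mathlib

/-!
Write `ψ z = φ (m z)`. Applying `m`-convexity first with `t = 0` (which gives
`φ (m x) ≤ m φ x`) and then to the pair `(m x, y)` shows
`ψ (s x + (1 - s) y) ≤ m (s φ x + (1 - s) φ y)`. With `x = a`, `y = b` this bounds `ψ ∘ f`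
pointwise by `m` times the chord of `φ` over `[a, b]`; integrating gives
`∫ ψ ∘ f ≤ m (T φ a + (1 - T) φ b)` with `T = (b - ∫ f) / (b - a)`. The same estimate at the
point `s = 1 - m T`, for which `m (s a + (1 - s) b) = m a + m² b - m² ∫ f`, closes the
inequality. When `a = b` both are `0` and the claim reduces to `φ 0 ≤ m² φ 0`.
-/

open MeasureTheory Set

def MConvexOn (m : ℝ) (S : Set ℝ) (φ : ℝ → ℝ) : Prop :=
  ∀ x ∈ S, ∀ y ∈ S, ∀ t ∈ Icc (0 : ℝ) 1,
    φ (t * x + m * (1 - t) * y) ≤ t * φ x + m * (1 - t) * φ y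

theorem ContinuousOn.measurable_comp {α β γ : Type*} [MeasurableSpace α]
    [TopologicalSpace β] [MeasurableSpace β] [OpensMeasurableSpace β]
    [TopologicalSpace γ] [MeasurableSpace γ] [BorelSpace γ]
    {s : Set β} {φ : β → γ} (hφ : ContinuousOn φ s) {g : α → β} (hg : Measurable g)
    (hgs : ∀ x, g x ∈ s) : Measurable fun x => φ (g x) :=
  hφ.domRestrict.measurable.comp (hg.subtype_mk (h := hgs))

theorem ContinuousOn.integrable_comp_of_isCompact {α β E : Type*} [MeasurableSpace α]
    {μ : Measure α} [IsFiniteMeasure μ] [TopologicalSpace β] [MeasurableSpace β]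
    [OpensMeasurableSpace β] [NormedAddCommGroup E] [MeasurableSpace E] [BorelSpace E]
    [SecondCountableTopology E] {s : Set β} (hs : IsCompact s) {φ : β → E}
    (hφ : ContinuousOn φ s) {g : α → β} (hg : Measurable g) (hgs : ∀ x, g x ∈ s) :
    Integrable (fun x => φ (g x)) μ := by
  obtain ⟨C, hC⟩ := hs.exists_bound_of_continuousOn hφ
  exact .of_bound (hφ.measurable_comp hg hgs).aestronglyMeasurable C
    (ae_of_all μ fun x => hC _ (hgs x))

theorem mul_mem_Icc_of_nonpos_of_nonneg {a b m z : ℝ} (ha : a ≤ 0) (hb : 0 ≤ b)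
    (hm : m ∈ Icc (0 : ℝ) 1) (hz : z ∈ Icc a b) : m * z ∈ Icc a b :=
  (convex_Icc a b).smul_mem_of_zero_mem ⟨ha, hb⟩ hz hm

namespace MConvexOn

variable {m : ℝ} {φ : ℝ → ℝ}

theorem map_mul_le {S : Set ℝ} (hφ : MConvexOn m S φ) {x : ℝ} (hx : x ∈ S) :
    φ (m * x) ≤ m * φ x := by
  simpa using hφ x hx x hx 0 ⟨le_rfl, zero_le_one⟩

theorem map_zero_le_sq_mul {S : Set ℝ} (hφ : MConvexOn m S φ) (h0 : (0 : ℝ) ∈ S)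
    (hm : 0 ≤ m) : φ 0 ≤ m ^ 2 * φ 0 := by
  have h := hφ.map_mul_le h0
  rw [mul_zero] at h
  calc φ 0 ≤ m * φ 0 := h
    _ ≤ m * (m * φ 0) := by gcongr
    _ = m ^ 2 * φ 0 := by ring

theorem map_mul_convex_combination_le {S : Set ℝ} (hφ : MConvexOn m S φ) {x y : ℝ}
    (hx : x ∈ S) (hy : y ∈ S) (hmx : m * x ∈ S) {s : ℝ} (hs : s ∈ Icc (0 : ℝ) 1) :
    φ (m * (s * x + (1 - s) * y)) ≤ m * (s * φ x + (1 - s) * φ y) :=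
  calc φ (m * (s * x + (1 - s) * y))
      = φ (s * (m * x) + m * (1 - s) * y) := by ring_nf
    _ ≤ s * φ (m * x) + m * (1 - s) * φ y := hφ _ hmx y hy s hs
    _ ≤ s * (m * φ x) + m * (1 - s) * φ y := by gcongr; exacts [hs.1, hφ.map_mul_le hx]
    _ = m * (s * φ x + (1 - s) * φ y) := by ring

variable {a b : ℝ} (hφ : MConvexOn m (Icc a b) φ) (ha : a ≤ 0) (hb : 0 ≤ b)
  (hm : m ∈ Icc (0 : ℝ) 1) (hab : a < b)
include hφ ha hb hm hab

theorem sub_mul_map_mul_le_chord {z : ℝ} (hz : z ∈ Icc a b) :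
    (b - a) * φ (m * z) ≤ m * ((b - z) * φ a + (z - a) * φ b) := by
  have hd : 0 < b - a := sub_pos.2 hab
  set s := (b - z) / (b - a) with hs_def
  have hs : s ∈ Icc (0 : ℝ) 1 :=
    ⟨div_nonneg (by linarith [hz.2]) hd.le, (div_le_one hd).2 (by linarith [hz.1])⟩
  have hzs : s * a + (1 - s) * b = z := by rw [hs_def]; field_simp; ring
  have key := hφ.map_mul_convex_combination_le (left_mem_Icc.2 hab.le) (right_mem_Icc.2 hab.le)
    (mul_mem_Icc_of_nonpos_of_nonneg ha hb hm (left_mem_Icc.2 hab.le)) hs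
  rw [hzs] at key
  calc (b - a) * φ (m * z) ≤ (b - a) * (m * (s * φ a + (1 - s) * φ b)) := by gcongr
    _ = m * ((b - z) * φ a + (z - a) * φ b) := by rw [hs_def]; field_simp; ring

theorem sub_mul_integral_map_mul_le_chord {X : Type*} [MeasurableSpace X] {μ : Measure X}
    [IsProbabilityMeasure μ] {f : X → ℝ} (hf : ∀ x, f x ∈ Icc a b) (hfi : Integrable f μ)
    (hφfi : Integrable (fun x => φ (m * f x)) μ) :
    (b - a) * ∫ x, φ (m * f x) ∂μ
      ≤ m * ((b - ∫ x, f x ∂μ) * φ a + ((∫ x, f x ∂μ) - a) * φ b) := by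
  set c := m * (b * φ a - a * φ b)
  set d := m * (φ b - φ a)
  calc (b - a) * ∫ x, φ (m * f x) ∂μ = ∫ x, (b - a) * φ (m * f x) ∂μ :=
        (integral_const_mul _ _).symm
    _ ≤ ∫ x, (c + d * f x) ∂μ := by
        refine integral_mono (hφfi.const_mul _) ((integrable_const c).add (hfi.const_mul d))
          fun x => ?_
        have := hφ.sub_mul_map_mul_le_chord ha hb hm hab (hf x)
        linarith
    _ = c + d * ∫ x, f x ∂μ := by
        rw [integral_add (integrable_const c) (hfi.const_mul d), integral_const,
          integral_const_mul, probReal_univ, one_smul]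
    _ = m * ((b - ∫ x, f x ∂μ) * φ a + ((∫ x, f x ∂μ) - a) * φ b) := by ring

theorem mercer_le_of_sub_mul_le_chord {I J : ℝ} (hI : I ∈ Icc a b)
    (hJ : (b - a) * J ≤ m * ((b - I) * φ a + (I - a) * φ b)) :
    φ (m * a + m ^ 2 * b - m ^ 2 * I) ≤ m * φ a + m ^ 2 * φ b - m * J := by
  have hz : a + m * (b - I) ∈ Icc a b :=
    ⟨by nlinarith [hm.1, hI.2], by nlinarith [hm.2, hI.1, hI.2]⟩
  have key := hφ.sub_mul_map_mul_le_chord ha hb hm hab hz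
  rw [show m * (a + m * (b - I)) = m * a + m ^ 2 * b - m ^ 2 * I by ring] at key
  refine le_of_mul_le_mul_left ?_ (sub_pos.2 hab)
  nlinarith [mul_le_mul_of_nonneg_left hJ hm.1]

end MConvexOn

/-- Continuous Jensen–Mercer-type inequality for m-convex functions: if `μ` is a
probability measure on `X`, `a ≤ 0 ≤ b`, `f : X → [a,b]` is measurable, and `φ` is a
continuous `m`-convex function on `[a,b]` with `m ∈ (0,1]`, then `f` and `x ↦ φ(m f(x))`
are `μ`-integrable and
`φ(m a + m² b − m² ∫ f dμ) ≤ m φ(a) + m² φ(b) − m ∫ φ(m f) dμ`. -/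
theorem jensen_mercer_mconvex_integral
    {X : Type*} [MeasurableSpace X] (μ : Measure X) [IsProbabilityMeasure μ]
    (a b : ℝ) (ha : a ≤ 0) (hb : 0 ≤ b)
    (f : X → ℝ) (hfm : Measurable f) (hf : ∀ x, f x ∈ Set.Icc a b)
    (m : ℝ) (hm : m ∈ Set.Ioc (0 : ℝ) 1)
    (φ : ℝ → ℝ) (hφc : ContinuousOn φ (Set.Icc a b))
    (hφ : ∀ x ∈ Set.Icc a b, ∀ y ∈ Set.Icc a b, ∀ t ∈ Set.Icc (0 : ℝ) 1,
      φ (t * x + m * (1 - t) * y) ≤ t * φ x + m * (1 - t) * φ y) :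
    Integrable f μ ∧ Integrable (fun x => φ (m * f x)) μ ∧
      φ (m * a + m ^ 2 * b - m ^ 2 * ∫ x, f x ∂μ)
        ≤ m * φ a + m ^ 2 * φ b - m * ∫ x, φ (m * f x) ∂μ := by
  have hφ' : MConvexOn m (Icc a b) φ := hφ
  have hm' : m ∈ Icc (0 : ℝ) 1 := Ioc_subset_Icc_self hm
  have hmf : ∀ x, m * f x ∈ Icc a b := fun x => mul_mem_Icc_of_nonpos_of_nonneg ha hb hm' (hf x)
  have hfi : Integrable f μ := .of_mem_Icc a b hfm.aemeasurable (ae_of_all μ hf)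
  have hφfi : Integrable (fun x => φ (m * f x)) μ :=
    hφc.integrable_comp_of_isCompact isCompact_Icc (measurable_const.mul hfm) hmf
  refine ⟨hfi, hφfi, ?_⟩
  rcases (ha.trans hb).eq_or_lt with rfl | hab
  · obtain rfl : a = 0 := le_antisymm ha hb
    obtain rfl : f = fun _ => 0 := funext fun x => le_antisymm (hf x).2 (hf x).1
    have := hφ'.map_zero_le_sq_mul ⟨le_rfl, le_rfl⟩ hm'.1
    simp only [mul_zero, integral_const, probReal_univ, one_smul, add_zero, sub_zero]
    linarith
  · have hI : ∫ x, f x ∂μ ∈ Icc a b :=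
      (convex_Icc a b).integral_mem isClosed_Icc (ae_of_all μ hf) hfi
    exact hφ'.mercer_le_of_sub_mul_le_chord ha hb hm' hab hI
      (hφ'.sub_mul_integral_map_mul_le_chord ha hb hm' hab hf hfi hφfi)
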